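/- arXiv:1104.1227 — 3 statements merged into one kernel-verified Lean document; each statement's English description precedes it below -/
import Mathlib

section
/- (Theorem 1, 'only if' direction) With the setup of the first-order intervention rule f(p) = [Σ_i α_i |p_i - p_i*|]_0^{P_0}, if the target p* ∈ ∏_i (0,P_i] is a Nash equilibrium of the induced game, then for every user i with p_i* < P_i it must hold that α_i ≥ (Σ_{j≠i} h_ij p_j* + n_i)/(p_i* h_{i0}) and P_0 ≥ (P_i - p_i*)(Σ_{j≠i} h_ij p_j* + n_i)/(p_i* h_{i0}). -/
open Finset

/-- First-order intervention rule based on individual transmit powers: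
`f(p) = [∑ i, α_i |p_i - p_i*|]₀^{P₀}` (the sum is nonnegative, so the lower
truncation is inactive). -/
noncomputable def intv {N : ℕ} (α pstar : Fin N → ℝ) (P0 : ℝ) (p : Fin N → ℝ) : ℝ :=
  min (∑ i, α i * |p i - pstar i|) P0

/-- SINR of user `i` under the intervention rule: `γ_i(f(p), p) =
h_ii p_i / (h_i0 f(p) + ∑_{j≠i} h_ij p_j + n_i)`. -/
noncomputable def sinr {N : ℕ} (h : Fin N → Fin N → ℝ) (h0 n α pstar : Fin N → ℝ)
    (P0 : ℝ) (i : Fin N) (p : Fin N → ℝ) : ℝ :=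
  h i i * p i / (h0 i * intv α pstar P0 p + ∑ j ∈ univ.erase i, h i j * p j + n i)

/-- `p` is a Nash equilibrium: no user can improve its payoff by a unilateral
deviation within `[0, Pmax i]`. -/
def isNE {N : ℕ} (Pmax : Fin N → ℝ) (payoff : Fin N → (Fin N → ℝ) → ℝ)
    (p : Fin N → ℝ) : Prop :=
  ∀ i, ∀ q, 0 ≤ q → q ≤ Pmax i →
    payoff i (Function.update p i q) ≤ payoff i p

/-!
At the target `p*` the intervention vanishes. If user `i` deviates to its maximal power
`P_i`, the intervention becomes `F = min (α_i (P_i - p_i*)) P₀` while the interference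
`D = ∑_{j≠i} h_ij p_j* + n_i` is unchanged, so the Nash condition
`h_ii P_i / (h_i0 F + D) ≤ h_ii p_i* / D` rearranges to `(P_i - p_i*) D ≤ p_i* h_i0 F`.
Bounding `F` by each argument of the `min` gives the two inequalities.
-/

def interferencePlusNoise {N : ℕ} (h : Fin N → Fin N → ℝ) (n : Fin N → ℝ) (i : Fin N)
    (p : Fin N → ℝ) : ℝ :=
  ∑ j ∈ univ.erase i, h i j * p j + n i

section

variable {N : ℕ} (h : Fin N → Fin N → ℝ) (h0 n α pstar : Fin N → ℝ) (P0 : ℝ)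

theorem sinr_eq (i : Fin N) (p : Fin N → ℝ) :
    sinr h h0 n α pstar P0 i p =
      h i i * p i / (h0 i * intv α pstar P0 p + interferencePlusNoise h n i p) := by
  rw [sinr, interferencePlusNoise, add_assoc]

theorem interferencePlusNoise_update_self (i : Fin N) (p : Fin N → ℝ) (q : ℝ) :
    interferencePlusNoise h n i (Function.update p i q) = interferencePlusNoise h n i p := by
  unfold interferencePlusNoise
  congr 1
  refine sum_congr rfl fun j hj => ?_
  rw [Function.update_of_ne (ne_of_mem_erase hj)]

theorem interferencePlusNoise_pos (hh : ∀ i j, 0 < h i j) (hn : ∀ i, 0 < n i) {p : Fin N → ℝ}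
    (hp : ∀ j, 0 ≤ p j) (i : Fin N) : 0 < interferencePlusNoise h n i p :=
  add_pos_of_nonneg_of_pos
    (sum_nonneg fun j _ => mul_nonneg (hh i j).le (hp j)) (hn i)

theorem intv_self (hP0 : 0 ≤ P0) : intv α pstar P0 pstar = 0 := by
  simp [intv, hP0]

theorem intv_update_self (i : Fin N) (q : ℝ) :
    intv α pstar P0 (Function.update pstar i q) = min (α i * |q - pstar i|) P0 := by
  rw [intv, sum_eq_single i]
  · simp
  · intro j _ hj
    simp [Function.update_of_ne hj]
  · simp

end

theorem sub_mul_le_of_div_add_le_div {c p q D K : ℝ} (hc : 0 < c) (hD : 0 < D)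
    (hK : 0 ≤ K) (hle : c * q / (K + D) ≤ c * p / D) : (q - p) * D ≤ p * K := by
  rw [div_le_div_iff₀ (by linarith) hD, mul_assoc, mul_assoc] at hle
  nlinarith [le_of_mul_le_mul_left hle hc]

theorem isNE.sub_mul_interferencePlusNoise_le {N : ℕ} {h : Fin N → Fin N → ℝ}
    {h0 n Pmax pstar α : Fin N → ℝ} {P0 : ℝ}
    (hh : ∀ i j, 0 < h i j) (hh0 : ∀ i, 0 < h0 i) (hn : ∀ i, 0 < n i)
    (hp1 : ∀ i, 0 < pstar i) (hα0 : ∀ i, 0 ≤ α i) (hP0 : 0 < P0)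
    (hNE : isNE Pmax (sinr h h0 n α pstar P0) pstar) {i : Fin N} {q : ℝ}
    (hq : pstar i ≤ q) (hqP : q ≤ Pmax i) :
    (q - pstar i) * interferencePlusNoise h n i pstar ≤
      pstar i * h0 i * min (α i * (q - pstar i)) P0 := by
  have hF : 0 ≤ min (α i * (q - pstar i)) P0 :=
    le_min (mul_nonneg (hα0 i) (sub_nonneg.mpr hq)) hP0.le
  have hdev := hNE i q ((hp1 i).le.trans hq) hqP
  rw [sinr_eq, sinr_eq, intv_self _ _ _ hP0.le, intv_update_self,
    interferencePlusNoise_update_self, Function.update_self, abs_of_nonneg (sub_nonneg.mpr hq),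
    mul_zero, zero_add] at hdev
  rw [mul_assoc]
  exact sub_mul_le_of_div_add_le_div (hh i i)
    (interferencePlusNoise_pos h n hh hn (fun j => (hp1 j).le) i)
    (mul_nonneg (hh0 i).le hF) hdev

theorem stmt3_general (N : ℕ) (h : Fin N → Fin N → ℝ) (h0 n Pmax pstar α : Fin N → ℝ) (P0 : ℝ)
    (hh : ∀ i j, 0 < h i j) (hh0 : ∀ i, 0 < h0 i) (hn : ∀ i, 0 < n i)
    (hp1 : ∀ i, 0 < pstar i)
    (hα0 : ∀ i, 0 ≤ α i) (hP0 : 0 < P0)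
    (hNE : isNE Pmax (sinr h h0 n α pstar P0) pstar) :
    ∀ i, pstar i < Pmax i →
      (∑ j ∈ univ.erase i, h i j * pstar j + n i) / (pstar i * h0 i) ≤ α i ∧
      (Pmax i - pstar i) * (∑ j ∈ univ.erase i, h i j * pstar j + n i) /
        (pstar i * h0 i) ≤ P0 := by
  intro i hi
  have hgap : 0 < Pmax i - pstar i := sub_pos.mpr hi
  have hph : 0 < pstar i * h0 i := mul_pos (hp1 i) (hh0 i)
  have hbound := isNE.sub_mul_interferencePlusNoise_le hh hh0 hn hp1 hα0 hP0 hNE hi.le le_rfl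
  rw [← interferencePlusNoise, div_le_iff₀ hph, div_le_iff₀ hph]
  constructor
  · refine le_of_mul_le_mul_left ?_ hgap
    calc (Pmax i - pstar i) * interferencePlusNoise h n i pstar
        ≤ pstar i * h0 i * (α i * (Pmax i - pstar i)) :=
          hbound.trans (mul_le_mul_of_nonneg_left (min_le_left _ _) hph.le)
      _ = (Pmax i - pstar i) * (α i * (pstar i * h0 i)) := by ring
  · simpa only [mul_comm P0] using
      hbound.trans (mul_le_mul_of_nonneg_left (min_le_right _ _) hph.le)

/-- Theorem 1, 'only if' direction: if the target `p*` is a Nash equilibrium of the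
game induced by the first-order intervention rule, then the stated lower bounds on
the intervention rates and the power budget must hold for every user with
`p_i* < P_i`. -/
theorem stmt3 (N : ℕ) (h : Fin N → Fin N → ℝ) (h0 n Pmax pstar α : Fin N → ℝ) (P0 : ℝ)
    (hh : ∀ i j, 0 < h i j) (hh0 : ∀ i, 0 < h0 i) (hn : ∀ i, 0 < n i)
    (hP : ∀ i, 0 < Pmax i) (hp1 : ∀ i, 0 < pstar i) (hp2 : ∀ i, pstar i ≤ Pmax i)
    (hα0 : ∀ i, 0 ≤ α i) (hP0 : 0 < P0)
    (hNE : isNE Pmax (sinr h h0 n α pstar P0) pstar) :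
    ∀ i, pstar i < Pmax i →
      (∑ j ∈ univ.erase i, h i j * pstar j + n i) / (pstar i * h0 i) ≤ α i ∧
      (Pmax i - pstar i) * (∑ j ∈ univ.erase i, h i j * pstar j + n i) /
        (pstar i * h0 i) ≤ P0 :=
  stmt3_general N h h0 n Pmax pstar α P0 hh hh0 hn hp1 hα0 hP0 hNE
end

section
/- (Theorem 2) Let p* ∈ ∏_i (0,P_i] and label the users with p_i* < P_i as 1,...,N'. If the intervention rates satisfy α_i > (1/p_i*) Σ_{j>i} α_j (P_j - p_j*) + (Σ_{j<i} h_ij p_j* + Σ_{j>i} h_ij P_j + n_i)/(p_i* h_{i0}) and the capability satisfies P_0 > (P_i/p_i*) Σ_{j>i} α_j (P_j - p_j*) + (P_i - p_i*)(Σ_{j<i} h_ij p_j* + Σ_{j>i} h_ij P_j + n_i)/(p_i* h_{i0}) for all i ≤ N' (with α_i = 0 for i > N'), then p* is the unique Nash equilibrium of the game induced by the first-order intervention rule f(p) = [Σ_i α_i |p_i - p_i*|]_0^{P_0}. -/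
open Finset

/-!
At `p*` the intervention vanishes. A user that lowers its power below `p_i*` loses signal and
does not lower the intervention, so in no equilibrium is a user below its target. A user that
raises its power above `p_i*` triggers an intervention growing at rate `α_i` and capped at `P₀`.
As long as the users before `i` play their targets and all others stay within their power
limits, user `i` faces interference plus noise at most `worstInterference` and the others
contribute at most `tailRate` to the intervention; the two threshold conditions say that then
the extra intervention costs user `i` more SINR than its extra power gains. Applied at `p*`, this
makes `p*` an equilibrium; applied at an equilibrium `p ≥ p*` with `p ≠ p*` to the first user
above its target, it gives that user a profitable deviation back to `p_i*`.
-/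

section Order

theorem sum_erase_eq_sum_lt_add_sum_gt {ι M : Type*} [Fintype ι] [LinearOrder ι]
    [AddCommMonoid M] (i : ι) (g : ι → M) :
    ∑ j ∈ univ.erase i, g j = ∑ j ∈ univ.filter (· < i), g j + ∑ j ∈ univ.filter (i < ·), g j := by
  have hsplit : univ.erase i = univ.filter (· < i) ∪ univ.filter (i < ·) := by
    ext j
    simp
  rw [hsplit, sum_union (disjoint_filter.2 fun j _ h₁ h₂ => lt_asymm h₁ h₂)]

theorem exists_ne_and_forall_lt_eq {ι α : Type*} [LT ι] [WellFoundedLT ι] {f g : ι → α}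
    (hfg : f ≠ g) : ∃ i, f i ≠ g i ∧ ∀ j < i, f j = g j := by
  obtain ⟨i, hi, hmin⟩ := wellFounded_lt.has_min {i | f i ≠ g i} (Function.ne_iff.1 hfg)
  exact ⟨i, hi, fun j hj => by_contra fun hne => hmin j hne hj⟩

end Order

/-- User `i`'s SINR as a function of its own power `q`, the other powers being fixed:
`g = h_ii`, `b = h_i0`, `c` is the interference plus noise, `s = p_i*`, and `S` is the other
users' contribution to the intervention sum. -/
noncomputable def ownSinr (g b c a s S P0 q : ℝ) : ℝ :=
  g * q / (b * min (a * |q - s| + S) P0 + c)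

section OwnSinr

variable {g b c a s S P0 q : ℝ}

theorem ownSinr_lt_of_lt (hg : 0 < g) (hb : 0 ≤ b) (hc : 0 < c) (ha : 0 ≤ a) (hS : 0 ≤ S)
    (hP0 : 0 ≤ P0) (hq : 0 ≤ q) (hqs : q < s) :
    ownSinr g b c a s S P0 q < ownSinr g b c a s S P0 s := by
  have hDs : 0 < b * min S P0 + c := by
    have := mul_nonneg hb (le_min hS hP0)
    linarith
  have hD : b * min S P0 + c ≤ b * min (a * |q - s| + S) P0 + c := by
    gcongr
    exact le_add_of_nonneg_left (by positivity)
  rw [ownSinr, ownSinr, sub_self, abs_zero, mul_zero, zero_add]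
  calc g * q / (b * min (a * |q - s| + S) P0 + c)
      ≤ g * q / (b * min S P0 + c) := div_le_div_of_nonneg_left (by positivity) hDs hD
    _ < g * s / (b * min S P0 + c) := by gcongr

theorem ownSinr_lt_of_gt (hg : 0 < g) (hb : 0 < b) (hs : 0 < s) (hS : 0 ≤ S) (hc : 0 < c)
    (hsq : s < q) (hrate : b * S + c < a * s * b)
    (hcap : b * q * S + (q - s) * c < P0 * s * b) :
    ownSinr g b c a s S P0 q < ownSinr g b c a s S P0 s := by
  have ha : 0 < a := by
    by_contra! ha
    nlinarith [mul_nonneg hb.le hS, mul_nonpos_of_nonpos_of_nonneg ha (mul_pos hs hb).le]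
  have hP0 : 0 < P0 := by
    by_contra! hP0
    nlinarith [mul_nonneg (mul_nonneg hb.le (hs.trans hsq).le) hS, mul_pos (sub_pos.2 hsq) hc,
      mul_nonpos_of_nonpos_of_nonneg hP0 (mul_pos hs hb).le]
  have hDs : 0 < b * min S P0 + c := by
    have := mul_nonneg hb.le (le_min hS hP0.le)
    linarith
  have hDq : 0 < b * min (a * (q - s) + S) P0 + c := by
    have := mul_nonneg hb.le (le_min (add_nonneg (mul_pos ha (sub_pos.2 hsq)).le hS) hP0.le)
    linarith
  rw [ownSinr, ownSinr, sub_self, abs_zero, mul_zero, zero_add, abs_of_pos (sub_pos.2 hsq),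
    div_lt_div_iff₀ hDq hDs]
  suffices q * (b * min S P0 + c) < s * (b * min (a * (q - s) + S) P0 + c) by
    nlinarith [mul_lt_mul_of_pos_left this hg]
  have hmin : q * b * min S P0 ≤ q * b * S :=
    mul_le_mul_of_nonneg_left (min_le_left _ _) (mul_nonneg (hs.trans hsq).le hb.le)
  -- below the cap the extra intervention `a (q - s)` outweighs the gain by `hrate`; at it, `hcap`
  rcases min_cases (a * (q - s) + S) P0 with ⟨hm, -⟩ | ⟨hm, -⟩ <;> rw [hm]
  · nlinarith [mul_pos (sub_pos.2 hsq) (sub_pos.2 hrate)]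
  · nlinarith

theorem rate_lt_of_threshold {A K : ℝ} (hb : 0 < b) (hs : 0 < s) (hSA : S ≤ A) (hcK : c ≤ K)
    (h : 1 / s * A + K / (s * b) < a) : b * S + c < a * s * b := by
  rw [show 1 / s * A + K / (s * b) = (b * A + K) / (s * b) by field_simp,
    div_lt_iff₀ (mul_pos hs hb)] at h
  nlinarith [mul_le_mul_of_nonneg_left hSA hb.le]

theorem cap_lt_of_threshold {A K Pm : ℝ} (hb : 0 < b) (hs : 0 < s) (hS : 0 ≤ S) (hSA : S ≤ A)
    (hc : 0 ≤ c) (hcK : c ≤ K) (hsq : s < q) (hqP : q ≤ Pm)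
    (h : Pm / s * A + (Pm - s) * K / (s * b) < P0) :
    b * q * S + (q - s) * c < P0 * s * b := by
  rw [show Pm / s * A + (Pm - s) * K / (s * b) = (b * (Pm * A) + (Pm - s) * K) / (s * b) by
      field_simp,
    div_lt_iff₀ (mul_pos hs hb)] at h
  have hqS : q * S ≤ Pm * A := mul_le_mul hqP hSA hS (by linarith)
  have hc' : (q - s) * c ≤ (Pm - s) * K := mul_le_mul (by linarith) hcK hc (by linarith)
  nlinarith [mul_le_mul_of_nonneg_left hqS hb.le]

end OwnSinr

section Game

variable {N : ℕ} (h : Fin N → Fin N → ℝ) (h0 n α pstar Pmax : Fin N → ℝ) (P0 : ℝ)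

def tailRate (i : Fin N) : ℝ :=
  ∑ j ∈ univ.filter (fun j => i < j), α j * (Pmax j - pstar j)

def worstInterference (i : Fin N) : ℝ :=
  ∑ j ∈ univ.filter (fun j => j < i), h i j * pstar j
    + ∑ j ∈ univ.filter (fun j => i < j), h i j * Pmax j + n i

theorem intv_update (p : Fin N → ℝ) (i : Fin N) (q : ℝ) :
    intv α pstar P0 (Function.update p i q)
      = min (α i * |q - pstar i| + ∑ j ∈ univ.erase i, α j * |p j - pstar j|) P0 := by
  rw [intv, ← add_sum_erase univ _ (mem_univ i), Function.update_self]
  congr 2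
  exact sum_congr rfl fun j hj => by rw [Function.update_of_ne (ne_of_mem_erase hj)]

theorem sinr_update (p : Fin N → ℝ) (i : Fin N) (q : ℝ) :
    sinr h h0 n α pstar P0 i (Function.update p i q)
      = ownSinr (h i i) (h0 i) (∑ j ∈ univ.erase i, h i j * p j + n i) (α i) (pstar i)
          (∑ j ∈ univ.erase i, α j * |p j - pstar j|) P0 q := by
  have hothers : ∑ j ∈ univ.erase i, h i j * Function.update p i q j
      = ∑ j ∈ univ.erase i, h i j * p j :=
    sum_congr rfl fun j hj => by rw [Function.update_of_ne (ne_of_mem_erase hj)]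
  rw [sinr, ownSinr, intv_update, hothers, Function.update_self, add_assoc]

variable {h h0 n α pstar Pmax P0}

theorem sum_abs_sub_le_tailRate (hα0 : ∀ j, 0 ≤ α j) {p : Fin N → ℝ} {i : Fin N}
    (hlow : ∀ j < i, p j = pstar j) (hge : ∀ j, pstar j ≤ p j) (hle : ∀ j, p j ≤ Pmax j) :
    ∑ j ∈ univ.erase i, α j * |p j - pstar j| ≤ tailRate α pstar Pmax i := by
  have hbefore : ∑ j ∈ univ.filter (· < i), α j * |p j - pstar j| = 0 :=
    sum_eq_zero fun j hj => by rw [hlow j (mem_filter.1 hj).2, sub_self, abs_zero, mul_zero]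
  rw [sum_erase_eq_sum_lt_add_sum_gt, hbefore, zero_add, tailRate]
  refine sum_le_sum fun j _ => ?_
  rw [abs_of_nonneg (sub_nonneg.2 (hge j))]
  exact mul_le_mul_of_nonneg_left (sub_le_sub_right (hle j) _) (hα0 j)

theorem interference_le_worstInterference {i : Fin N} (hrow : ∀ j, 0 ≤ h i j)
    {p : Fin N → ℝ} (hlow : ∀ j < i, p j = pstar j) (hle : ∀ j, p j ≤ Pmax j) :
    ∑ j ∈ univ.erase i, h i j * p j + n i ≤ worstInterference h n pstar Pmax i := by
  have hbefore : ∑ j ∈ univ.filter (· < i), h i j * p j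
      = ∑ j ∈ univ.filter (· < i), h i j * pstar j :=
    sum_congr rfl fun j hj => by rw [hlow j (mem_filter.1 hj).2]
  rw [sum_erase_eq_sum_lt_add_sum_gt, hbefore, worstInterference]
  gcongr with j
  exacts [hrow j, hle j]

theorem sinr_update_lt_of_lt {i : Fin N} (hg : 0 < h i i) (hrow : ∀ j, 0 ≤ h i j)
    (hb : 0 ≤ h0 i) (hn : 0 < n i) (hα0 : ∀ j, 0 ≤ α j) (hP0 : 0 ≤ P0) (p : Fin N → ℝ)
    (hp : ∀ j, 0 ≤ p j) (q : ℝ) (hq : 0 ≤ q) (hqs : q < pstar i) :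
    sinr h h0 n α pstar P0 i (Function.update p i q)
      < sinr h h0 n α pstar P0 i (Function.update p i (pstar i)) := by
  rw [sinr_update, sinr_update]
  exact ownSinr_lt_of_lt hg hb
    (add_pos_of_nonneg_of_pos (sum_nonneg fun j _ => mul_nonneg (hrow j) (hp j)) hn) (hα0 i)
    (sum_nonneg fun j _ => mul_nonneg (hα0 j) (abs_nonneg _)) hP0 hq hqs

theorem sinr_update_lt_of_gt {i : Fin N} (hg : 0 < h i i) (hrow : ∀ j, 0 ≤ h i j)
    (hb : 0 < h0 i) (hn : 0 < n i) (hα0 : ∀ j, 0 ≤ α j) (hs : 0 < pstar i)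
    (hrate : (1 / pstar i) * tailRate α pstar Pmax i
      + worstInterference h n pstar Pmax i / (pstar i * h0 i) < α i)
    (hcap : (Pmax i / pstar i) * tailRate α pstar Pmax i
      + (Pmax i - pstar i) * worstInterference h n pstar Pmax i / (pstar i * h0 i) < P0)
    (p : Fin N → ℝ) (hp : ∀ j, 0 ≤ p j) (hlow : ∀ j < i, p j = pstar j)
    (hge : ∀ j, pstar j ≤ p j) (hle : ∀ j, p j ≤ Pmax j) (q : ℝ) (hsq : pstar i < q)
    (hqP : q ≤ Pmax i) :
    sinr h h0 n α pstar P0 i (Function.update p i q)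
      < sinr h h0 n α pstar P0 i (Function.update p i (pstar i)) := by
  have hS0 : 0 ≤ ∑ j ∈ univ.erase i, α j * |p j - pstar j| :=
    sum_nonneg fun j _ => mul_nonneg (hα0 j) (abs_nonneg _)
  have hc0 : 0 < ∑ j ∈ univ.erase i, h i j * p j + n i :=
    add_pos_of_nonneg_of_pos (sum_nonneg fun j _ => mul_nonneg (hrow j) (hp j)) hn
  have hSA := sum_abs_sub_le_tailRate hα0 hlow hge hle
  have hcK := interference_le_worstInterference (n := n) hrow hlow hle
  rw [sinr_update, sinr_update]
  exact ownSinr_lt_of_gt hg hb hs hS0 hc0 hsq (rate_lt_of_threshold hb hs hSA hcK hrate)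
    (cap_lt_of_threshold hb hs hS0 hSA hc0.le hcK hsq hqP hcap)

end Game

theorem stmt5_general (N : ℕ) (h : Fin N → Fin N → ℝ) (h0 n Pmax pstar α : Fin N → ℝ)
    (P0 : ℝ)
    (hh : ∀ i j, 0 < h i j) (hh0 : ∀ i, 0 < h0 i) (hn : ∀ i, 0 < n i)
    (hp1 : ∀ i, 0 < pstar i) (hp2 : ∀ i, pstar i ≤ Pmax i)
    (hα0 : ∀ i, 0 ≤ α i) (hP0 : 0 < P0)
    (hα : ∀ i : Fin N, pstar i < Pmax i →
      (1 / pstar i) * ∑ j ∈ univ.filter (fun j => i < j), α j * (Pmax j - pstar j)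
        + (∑ j ∈ univ.filter (fun j => j < i), h i j * pstar j
            + ∑ j ∈ univ.filter (fun j => i < j), h i j * Pmax j + n i) /
          (pstar i * h0 i) < α i)
    (hP0c : ∀ i : Fin N, pstar i < Pmax i →
      (Pmax i / pstar i) * ∑ j ∈ univ.filter (fun j => i < j), α j * (Pmax j - pstar j)
        + (Pmax i - pstar i) * (∑ j ∈ univ.filter (fun j => j < i), h i j * pstar j
            + ∑ j ∈ univ.filter (fun j => i < j), h i j * Pmax j + n i) /
          (pstar i * h0 i) < P0) :
    isNE Pmax (sinr h h0 n α pstar P0) pstar ∧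
    (∀ p : Fin N → ℝ, (∀ i, 0 ≤ p i ∧ p i ≤ Pmax i) →
      isNE Pmax (sinr h h0 n α pstar P0) p → p = pstar) := by
  have hrow : ∀ i j, 0 ≤ h i j := fun i j => (hh i j).le
  have hdown (i : Fin N) := sinr_update_lt_of_lt (pstar := pstar) (hh i i) (hrow i) (hh0 i).le
    (hn i) hα0 hP0.le
  have hup (i : Fin N) (hi : pstar i < Pmax i) :=
    sinr_update_lt_of_gt (hh i i) (hrow i) (hh0 i) (hn i) hα0 (hp1 i) (hα i hi) (hP0c i hi)
  refine ⟨fun i q hq hqP => ?_, fun p hp hNE => ?_⟩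
  · rcases lt_trichotomy q (pstar i) with hqs | rfl | hsq
    · simpa using (hdown i pstar (fun j => (hp1 j).le) q hq hqs).le
    · simp
    · simpa using (hup i (hsq.trans_le hqP) pstar (fun j => (hp1 j).le) (fun _ _ => rfl)
        (fun _ => le_rfl) hp2 q hsq hqP).le
  have hge (i : Fin N) : pstar i ≤ p i := not_lt.1 fun hlt => by
    have hbetter := hdown i p (fun j => (hp j).1) (p i) (hp i).1 hlt
    simp only [Function.update_eq_self] at hbetter
    exact (hNE i _ (hp1 i).le (hp2 i)).not_gt hbetter
  by_contra hne
  obtain ⟨i, hi, hlow⟩ := exists_ne_and_forall_lt_eq hne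
  have hlt : pstar i < p i := (hge i).lt_of_ne' hi
  have hbetter := hup i (hlt.trans_le (hp i).2) p (fun j => (hp j).1) hlow hge
    (fun j => (hp j).2) (p i) hlt (hp i).2
  simp only [Function.update_eq_self] at hbetter
  exact (hNE i _ (hp1 i).le (hp2 i)).not_gt hbetter

/-- Theorem 2: sufficient conditions for strong sustainment. Users are labeled so
that `p_i* < P_i` iff `i < N'`. If the intervention rates and the capability
satisfy the stated strict bounds for all `i < N'` (with `α_i = 0` for `i ≥ N'`),
then `p*` is the unique Nash equilibrium. -/
theorem stmt5 (N N' : ℕ) (h : Fin N → Fin N → ℝ) (h0 n Pmax pstar α : Fin N → ℝ)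
    (P0 : ℝ)
    (hh : ∀ i j, 0 < h i j) (hh0 : ∀ i, 0 < h0 i) (hn : ∀ i, 0 < n i)
    (hP : ∀ i, 0 < Pmax i) (hp1 : ∀ i, 0 < pstar i) (hp2 : ∀ i, pstar i ≤ Pmax i)
    (hα0 : ∀ i, 0 ≤ α i) (hP0 : 0 < P0)
    (hord : ∀ i : Fin N, pstar i < Pmax i ↔ (i : ℕ) < N')
    (hαz : ∀ i : Fin N, ¬ pstar i < Pmax i → α i = 0)
    (hα : ∀ i : Fin N, pstar i < Pmax i →
      (1 / pstar i) * ∑ j ∈ univ.filter (fun j => i < j), α j * (Pmax j - pstar j)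
        + (∑ j ∈ univ.filter (fun j => j < i), h i j * pstar j
            + ∑ j ∈ univ.filter (fun j => i < j), h i j * Pmax j + n i) /
          (pstar i * h0 i) < α i)
    (hP0c : ∀ i : Fin N, pstar i < Pmax i →
      (Pmax i / pstar i) * ∑ j ∈ univ.filter (fun j => i < j), α j * (Pmax j - pstar j)
        + (Pmax i - pstar i) * (∑ j ∈ univ.filter (fun j => j < i), h i j * pstar j
            + ∑ j ∈ univ.filter (fun j => i < j), h i j * Pmax j + n i) /
          (pstar i * h0 i) < P0) :
    isNE Pmax (sinr h h0 n α pstar P0) pstar ∧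
    (∀ p : Fin N → ℝ, (∀ i, 0 ≤ p i ∧ p i ≤ Pmax i) →
      isNE Pmax (sinr h h0 n α pstar P0) p → p = pstar) :=
  stmt5_general N h h0 n Pmax pstar α P0 hh hh0 hn hp1 hp2 hα0 hP0 hα hP0c
end

section
/- (Theorem 7) Suppose for target p* ∈ ∏_i (0,P_i] there exist two users i, j with p_i*, p_j* below their maxima such that the pairs (α_0^i, α_0^j) and (P_0^i, P_0^j) each satisfy: either the first entry equals the maximum over users and strictly exceeds the second, or both are strictly below the maximum, where α_0^k = (Σ_{l≠k} h_kl p_l* + n_k)/(h_{0k} p_k* h_{k0}) and P_0^k = (P_k − p_k*)(Σ_{l≠k} h_kl p_l* + n_k)/(p_k* h_{k0}). Then for any aggregate-power intervention rule f sustaining p* and for any ε > 0, there exists a profile \tilde p ≠ p* with \tilde p ∈ E(f), Σ_k h_{0k} \tilde p_k = Σ_k h_{0k} p_k*, and |\tilde p − p*| < ε. In particular, p* cannot be strongly sustained by any aggregate-power first-order intervention rule. -/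
open Finset

/-- First-order intervention rule based on aggregate receive power:
`f(p) = [α₀ |∑ i, g_i p_i − p_A*|]₀^{P₀}` with `p_A* = ∑ i, g_i p_i*`,
where `g i = h_{0i}` is the gain from user `i` to the intervention device's
receiver (the expression inside is nonnegative, so the lower truncation is
inactive). -/
noncomputable def intvA {N : ℕ} (α0 : ℝ) (g pstar : Fin N → ℝ) (P0 : ℝ)
    (p : Fin N → ℝ) : ℝ :=
  min (α0 * |∑ i, g i * p i - ∑ i, g i * pstar i|) P0

/-- SINR of user `i` under the aggregate-power intervention rule. -/
noncomputable def sinrA {N : ℕ} (h : Fin N → Fin N → ℝ) (h0 n g : Fin N → ℝ)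
    (α0 : ℝ) (pstar : Fin N → ℝ) (P0 : ℝ) (i : Fin N) (p : Fin N → ℝ) : ℝ :=
  h i i * p i /
    (h0 i * intvA α0 g pstar P0 p + ∑ j ∈ univ.erase i, h i j * p j + n i)

/-!
On profiles with the target aggregate receive power the intervention is silent, and such a
profile is an equilibrium exactly when every user `k` below its maximum meets the thresholds
`α₀ᵏ ≤ α₀` and `P₀ᵏ ≤ P₀` evaluated at that profile. Scaling a user's power and all
interfering powers by `1 + c` can only lower its thresholds, since the noise does not scale.
The hypothesis on `i, j` makes user `j` meet both thresholds strictly at `p*`. So scale every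
user other than `j` that is below its maximum by `1 + c` and lower `p_j` to restore the
aggregate: for small `c > 0` user `j` still meets its thresholds by continuity, the others by
scaling, and the profile differs from `p*` because `p_i` moved.
-/

open Filter Topology

theorem forall_div_le_div_iff {I c0 g α0 P0 Pmax p : ℝ} (hI : 0 < I) (hc0 : 0 ≤ c0)
    (hg : 0 ≤ g) (hα0 : 0 ≤ α0) (hP0 : 0 < P0) (hp : 0 ≤ p) :
    (∀ q, 0 ≤ q → q ≤ Pmax → q / (c0 * min (α0 * |g * (q - p)|) P0 + I) ≤ p / I) ↔
      (p < Pmax → I ≤ α0 * (g * p * c0) ∧ (Pmax - p) * I ≤ P0 * (p * c0)) := by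
  have hden : ∀ q, 0 < c0 * min (α0 * |g * (q - p)|) P0 + I := fun q => by
    have := mul_nonneg hc0 (le_min (mul_nonneg hα0 (abs_nonneg (g * (q - p)))) hP0.le)
    linarith
  constructor
  · intro hdev hpP
    -- a deviation small enough that the intervention stays below its cap `P0`
    set Δ := min (Pmax - p) (P0 / (1 + α0 * g))
    have hαg : 0 ≤ α0 * g := mul_nonneg hα0 hg
    have hΔ : 0 < Δ := lt_min (sub_pos.2 hpP) (div_pos hP0 (by linarith))
    have hΔP0 : α0 * (g * Δ) ≤ P0 := by
      have := (le_div_iff₀ (by linarith)).1 (min_le_right (Pmax - p) (P0 / (1 + α0 * g)))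
      nlinarith
    constructor
    · have h := hdev (p + Δ) (by linarith)
        (by linarith [min_le_left (Pmax - p) (P0 / (1 + α0 * g))])
      rw [div_le_div_iff₀ (hden _) hI, add_sub_cancel_left,
        abs_of_nonneg (mul_nonneg hg hΔ.le), min_eq_left hΔP0] at h
      have : Δ * I ≤ Δ * (α0 * (g * p * c0)) := by linarith
      exact le_of_mul_le_mul_left this hΔ
    · have h := hdev Pmax (by linarith) le_rfl
      rw [div_le_div_iff₀ (hden _) hI] at h
      nlinarith [mul_le_mul_of_nonneg_left (min_le_right (α0 * |g * (Pmax - p)|) P0)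
        (mul_nonneg hp hc0)]
  · intro hth q hq0 hqP
    rw [div_le_div_iff₀ (hden _) hI]
    rcases le_or_gt q p with hqp | hpq
    · nlinarith [mul_nonneg (mul_nonneg hp hc0)
        (le_min (mul_nonneg hα0 (abs_nonneg (g * (q - p)))) hP0.le)]
    · obtain ⟨hα, hP⟩ := hth (hpq.trans_le hqP)
      have : (q - p) * I ≤ p * c0 * min (α0 * |g * (q - p)|) P0 := by
        rw [mul_min_of_nonneg _ _ (mul_nonneg hp hc0),
          abs_of_nonneg (mul_nonneg hg (by linarith))]
        exact le_min (by nlinarith) (by nlinarith)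
      nlinarith

theorem exists_lt_of_max_or_lt {ι : Type*} {P : ι → Prop} {a : ι → ℝ} {i j : ι}
    (h : ((∀ k, P k → a k ≤ a i) ∧ a j < a i) ∨
      ((∃ k, P k ∧ a i < a k) ∧ (∃ k, P k ∧ a j < a k))) (hi : P i) :
    ∃ k, P k ∧ a j < a k := by
  rcases h with ⟨-, hji⟩ | ⟨-, hj⟩
  exacts [⟨i, hi, hji⟩, hj]

theorem sum_mul_update {ι : Type*} [Fintype ι] [DecidableEq ι] (g p : ι → ℝ) (k : ι) (q : ℝ) :
    ∑ l, g l * Function.update p k q l = ∑ l, g l * p l + g k * (q - p k) := by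
  rw [← add_sum_erase _ _ (mem_univ k), ← add_sum_erase _ (fun l => g l * p l) (mem_univ k),
    Function.update_self,
    sum_congr rfl fun l hl => by rw [Function.update_of_ne (ne_of_mem_erase hl)]]
  ring

section

variable {N : ℕ} {h : Fin N → Fin N → ℝ} {h0 n g Pmax pstar : Fin N → ℝ} {α0 P0 : ℝ}
  {j : Fin N}

def interference (h : Fin N → Fin N → ℝ) (n : Fin N → ℝ) (k : Fin N) (p : Fin N → ℝ) : ℝ :=
  ∑ l ∈ univ.erase k, h k l * p l + n k

/-- The thresholds `α₀ᵏ ≤ α₀` and `P₀ᵏ ≤ P₀` of the paper, cleared of denominators. -/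
def MeetsThresholds (h : Fin N → Fin N → ℝ) (h0 n g Pmax : Fin N → ℝ) (α0 P0 : ℝ)
    (p : Fin N → ℝ) (k : Fin N) : Prop :=
  interference h n k p ≤ α0 * (g k * p k * h0 k) ∧
    (Pmax k - p k) * interference h n k p ≤ P0 * (p k * h0 k)

theorem interference_update_self (p : Fin N → ℝ) (k : Fin N) (q : ℝ) :
    interference h n k (Function.update p k q) = interference h n k p := by
  unfold interference
  rw [sum_congr rfl fun l hl => by rw [Function.update_of_ne (ne_of_mem_erase hl)]]

theorem interference_pos (hh : ∀ k l, 0 ≤ h k l) (hn : ∀ k, 0 < n k) {p : Fin N → ℝ}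
    (hp : ∀ k, 0 ≤ p k) (k : Fin N) : 0 < interference h n k p :=
  add_pos_of_nonneg_of_pos (sum_nonneg fun l _ => mul_nonneg (hh k l) (hp l)) (hn k)

theorem interference_le_mul (hh : ∀ k l, 0 ≤ h k l) {k : Fin N} (hn : 0 ≤ n k) {c : ℝ}
    (hc : 0 ≤ c) {p q : Fin N → ℝ} (hpq : ∀ l, p l ≤ (1 + c) * q l) :
    interference h n k p ≤ (1 + c) * interference h n k q := by
  have hsum : ∑ l ∈ univ.erase k, h k l * p l ≤ (1 + c) * ∑ l ∈ univ.erase k, h k l * q l := by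
    rw [mul_sum]
    exact sum_le_sum fun l _ => by nlinarith [mul_le_mul_of_nonneg_left (hpq l) (hh k l)]
  unfold interference
  nlinarith

theorem sinrA_update_of_sum_eq {p : Fin N → ℝ} (hagg : ∑ l, g l * p l = ∑ l, g l * pstar l)
    (k : Fin N) (q : ℝ) :
    sinrA h h0 n g α0 pstar P0 k (Function.update p k q) =
      h k k * q / (h0 k * min (α0 * |g k * (q - p k)|) P0 + interference h n k p) := by
  rw [← interference_update_self p k q]
  unfold sinrA intvA interference
  rw [sum_mul_update, hagg, add_sub_cancel_left, Function.update_self, add_assoc]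

theorem sinrA_of_sum_eq (hP0 : 0 ≤ P0) {p : Fin N → ℝ}
    (hagg : ∑ l, g l * p l = ∑ l, g l * pstar l) (k : Fin N) :
    sinrA h h0 n g α0 pstar P0 k p = h k k * p k / interference h n k p := by
  simpa [min_eq_left hP0] using sinrA_update_of_sum_eq (h := h) (h0 := h0) (n := n) (α0 := α0)
    (P0 := P0) hagg k (p k)

theorem isNE_sinrA_iff (hh : ∀ k l, 0 ≤ h k l) (hhkk : ∀ k, 0 < h k k) (hh0 : ∀ k, 0 ≤ h0 k)
    (hg : ∀ k, 0 ≤ g k) (hn : ∀ k, 0 < n k) (hα0 : 0 ≤ α0) (hP0 : 0 < P0) {p : Fin N → ℝ}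
    (hp : ∀ k, 0 ≤ p k) (hagg : ∑ l, g l * p l = ∑ l, g l * pstar l) :
    isNE Pmax (sinrA h h0 n g α0 pstar P0) p ↔
      ∀ k, p k < Pmax k → MeetsThresholds h h0 n g Pmax α0 P0 p k := by
  refine forall_congr' fun k => ?_
  simp only [sinrA_update_of_sum_eq hagg, sinrA_of_sum_eq hP0.le hagg, mul_div_assoc,
    mul_le_mul_iff_right₀ (hhkk k)]
  exact forall_div_le_div_iff (interference_pos hh hn hp k) (hh0 k) (hg k) hα0 hP0 (hp k)

theorem MeetsThresholds.of_le_mul {p q : Fin N → ℝ} {k : Fin N} {c : ℝ}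
    (hq : MeetsThresholds h h0 n g Pmax α0 P0 q k) (hc : 0 ≤ c) (hqk : 0 ≤ q k)
    (hh0 : 0 ≤ h0 k) (hP0 : 0 ≤ P0) (hpk : p k = (1 + c) * q k)
    (hI0 : 0 ≤ interference h n k p)
    (hI : interference h n k p ≤ (1 + c) * interference h n k q) :
    MeetsThresholds h h0 n g Pmax α0 P0 p k := by
  obtain ⟨hα, hP⟩ := hq
  rw [MeetsThresholds, hpk]
  refine ⟨by nlinarith, ?_⟩
  rcases le_or_gt (Pmax k) ((1 + c) * q k) with hsat | hunsat
  · nlinarith [mul_nonneg hP0 (mul_nonneg (mul_nonneg (by linarith : (0:ℝ) ≤ 1 + c) hqk) hh0)]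
  · nlinarith [mul_le_mul_of_nonneg_left hI (by linarith : (0:ℝ) ≤ Pmax k - (1 + c) * q k),
      mul_le_mul_of_nonneg_left hP (by linarith : (0:ℝ) ≤ 1 + c),
      mul_nonneg (mul_nonneg hc hqk) (by linarith : (0:ℝ) ≤ 1 + c)]

theorem eventually_meetsThresholds {p : Fin N → ℝ} {k : Fin N}
    (hα : interference h n k p < α0 * (g k * p k * h0 k))
    (hP : (Pmax k - p k) * interference h n k p < P0 * (p k * h0 k)) :
    ∀ᶠ q in 𝓝 p, MeetsThresholds h h0 n g Pmax α0 P0 q k := by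
  have hI : Continuous (interference h n k) := by unfold interference; fun_prop
  have hα' := ContinuousAt.eventually_lt (g := fun q : Fin N → ℝ => α0 * (g k * q k * h0 k))
    hI.continuousAt (Continuous.continuousAt (by fun_prop)) hα
  have hP' := ContinuousAt.eventually_lt
    (f := fun q : Fin N → ℝ => (Pmax k - q k) * interference h n k q)
    (g := fun q : Fin N → ℝ => P0 * (q k * h0 k)) (by fun_prop)
    (Continuous.continuousAt (by fun_prop)) hP
  filter_upwards [hα', hP'] with q hqα hqP
  exact ⟨hqα.le, hqP.le⟩

/-- Users `k ≠ j` below their maximum move proportionally to `pstar k`, and user `j`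
compensates so that the aggregate receive power `∑ k, g k * p k` is unchanged. -/
noncomputable def perturbDir (g Pmax pstar : Fin N → ℝ) (j : Fin N) : Fin N → ℝ :=
  Function.update ({k | pstar k < Pmax k}.indicator pstar) j
    (-(∑ k ∈ univ.erase j, g k * {k | pstar k < Pmax k}.indicator pstar k) / g j)

theorem perturbDir_of_ne {k : Fin N} (hk : k ≠ j) :
    perturbDir g Pmax pstar j k = {k | pstar k < Pmax k}.indicator pstar k :=
  Function.update_of_ne hk _ _

theorem sum_mul_perturbDir (hgj : g j ≠ 0) : ∑ k, g k * perturbDir g Pmax pstar j k = 0 := by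
  have hjj : perturbDir g Pmax pstar j j =
      -(∑ k ∈ univ.erase j, g k * {k | pstar k < Pmax k}.indicator pstar k) / g j :=
    Function.update_self _ _ _
  have hrest : ∑ k ∈ univ.erase j, g k * perturbDir g Pmax pstar j k =
      ∑ k ∈ univ.erase j, g k * {k | pstar k < Pmax k}.indicator pstar k :=
    sum_congr rfl fun k hk => by rw [perturbDir_of_ne (ne_of_mem_erase hk)]
  rw [← add_sum_erase _ _ (mem_univ j), hjj, hrest]
  field_simp
  ring

theorem perturbDir_le_self (hg : ∀ k, 0 ≤ g k) (hp : ∀ k, 0 ≤ pstar k) (k : Fin N) :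
    perturbDir g Pmax pstar j k ≤ pstar k := by
  by_cases hk : k = j
  · subst hk
    refine le_trans ?_ (hp k)
    rw [perturbDir, Function.update_self]
    exact div_nonpos_of_nonpos_of_nonneg (neg_nonpos.2 (sum_nonneg fun l _ =>
      mul_nonneg (hg l) (Set.indicator_nonneg (fun l _ => hp l) l))) (hg k)
  · rw [perturbDir_of_ne hk]
    exact Set.indicator_le_self' (fun l _ => hp l) k

theorem add_smul_perturbDir_le (hg : ∀ k, 0 ≤ g k) (hp : ∀ k, 0 ≤ pstar k) {c : ℝ} (hc : 0 ≤ c)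
    (k : Fin N) : (pstar + c • perturbDir g Pmax pstar j) k ≤ (1 + c) * pstar k := by
  have := mul_le_mul_of_nonneg_left (perturbDir_le_self (Pmax := Pmax) (j := j) hg hp k) hc
  simp only [Pi.add_apply, Pi.smul_apply, smul_eq_mul]
  linarith

theorem sum_mul_add_smul_perturbDir (hgj : g j ≠ 0) (c : ℝ) :
    ∑ k, g k * (pstar + c • perturbDir g Pmax pstar j) k = ∑ k, g k * pstar k := by
  simp only [Pi.add_apply, Pi.smul_apply, smul_eq_mul, mul_add, sum_add_distrib,
    mul_left_comm _ c, ← mul_sum, sum_mul_perturbDir hgj, mul_zero, add_zero]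

theorem meetsThresholds_add_smul_perturbDir_of_ne (hh : ∀ k l, 0 ≤ h k l) (hh0 : ∀ k, 0 ≤ h0 k)
    (hg : ∀ k, 0 ≤ g k) (hn : ∀ k, 0 ≤ n k) (hP0 : 0 ≤ P0) (hp : ∀ k, 0 ≤ pstar k)
    (hcond : ∀ k, pstar k < Pmax k → MeetsThresholds h h0 n g Pmax α0 P0 pstar k)
    {c : ℝ} (hc : 0 ≤ c) (hpos : ∀ k, 0 ≤ (pstar + c • perturbDir g Pmax pstar j) k)
    {k : Fin N} (hkj : k ≠ j) (hlt : (pstar + c • perturbDir g Pmax pstar j) k < Pmax k) :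
    MeetsThresholds h h0 n g Pmax α0 P0 (pstar + c • perturbDir g Pmax pstar j) k := by
  by_cases hk : pstar k < Pmax k
  · refine (hcond k hk).of_le_mul hc (hp k) (hh0 k) hP0 ?_
      (add_nonneg (sum_nonneg fun l _ => mul_nonneg (hh k l) (hpos l)) (hn k))
      (interference_le_mul hh (hn k) hc (add_smul_perturbDir_le hg hp hc))
    simp only [Pi.add_apply, Pi.smul_apply, smul_eq_mul, perturbDir_of_ne hkj,
      Set.indicator_of_mem (show k ∈ {k | pstar k < Pmax k} from hk)]
    ring
  · simp [perturbDir_of_ne hkj, hk] at hlt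

theorem exists_ne_meetsThresholds_of_strict (hh : ∀ k l, 0 ≤ h k l) (hh0 : ∀ k, 0 ≤ h0 k)
    (hg : ∀ k, 0 < g k) (hn : ∀ k, 0 ≤ n k) (hP0 : 0 ≤ P0) (hp1 : ∀ k, 0 < pstar k)
    (hp2 : ∀ k, pstar k ≤ Pmax k) {i : Fin N} (hij : i ≠ j) (hi : pstar i < Pmax i)
    (hj : pstar j < Pmax j)
    (hcond : ∀ k, pstar k < Pmax k → MeetsThresholds h h0 n g Pmax α0 P0 pstar k)
    (hαj : interference h n j pstar < α0 * (g j * pstar j * h0 j))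
    (hPj : (Pmax j - pstar j) * interference h n j pstar < P0 * (pstar j * h0 j))
    {ε : ℝ} (hε : 0 < ε) :
    ∃ pt : Fin N → ℝ, pt ≠ pstar ∧ (∀ k, 0 ≤ pt k ∧ pt k ≤ Pmax k) ∧
      (∀ k, pt k < Pmax k → MeetsThresholds h h0 n g Pmax α0 P0 pt k) ∧
      ∑ k, g k * pt k = ∑ k, g k * pstar k ∧ ∀ k, |pt k - pstar k| < ε := by
  set v := perturbDir g Pmax pstar j
  have hnear : ∀ᶠ q in 𝓝 pstar, (∀ k, 0 < q k) ∧ (∀ k, pstar k < Pmax k → q k < Pmax k) ∧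
      MeetsThresholds h h0 n g Pmax α0 P0 q j ∧ dist q pstar < ε := by
    refine (eventually_all.2 fun k => ?_).and ((eventually_all.2 fun k => ?_).and
      ((eventually_meetsThresholds hαj hPj).and (Metric.ball_mem_nhds _ hε)))
    · exact (continuous_apply k).continuousAt.eventually (lt_mem_nhds (hp1 k))
    · by_cases hk : pstar k < Pmax k
      · exact ((continuous_apply k).continuousAt.eventually (gt_mem_nhds hk)).mono
          fun _ hq _ => hq
      · exact .of_forall fun _ hk' => absurd hk' hk
  have hlim : Tendsto (fun c : ℝ => pstar + c • v) (𝓝[>] 0) (𝓝 pstar) := by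
    have : Continuous fun c : ℝ => pstar + c • v := by fun_prop
    simpa using (this.tendsto 0).mono_left nhdsWithin_le_nhds
  obtain ⟨c, ⟨hpos, hlt, hthj, hdist⟩, hc : 0 < c⟩ :=
    ((hlim.eventually hnear).and self_mem_nhdsWithin).exists
  refine ⟨pstar + c • v, fun he => ?_, fun k => ⟨(hpos k).le, ?_⟩, fun k hk => ?_,
    sum_mul_add_smul_perturbDir (hg j).ne' c, fun k => ?_⟩
  · have := congrFun he i
    simp [v, perturbDir_of_ne hij, hi, hc.ne', (hp1 i).ne'] at this
  · by_cases hk : pstar k < Pmax k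
    · exact (hlt k hk).le
    · have hkj : k ≠ j := by rintro rfl; exact hk hj
      simpa [v, perturbDir_of_ne hkj, hk] using hp2 k
  · obtain rfl | hkj := eq_or_ne k j
    · exact hthj
    · exact meetsThresholds_add_smul_perturbDir_of_ne hh hh0 (fun k => (hg k).le) hn hP0
        (fun k => (hp1 k).le) hcond hc.le (fun k => (hpos k).le) hkj hk
  · rw [dist_pi_lt_iff hε] at hdist
    simpa [Real.dist_eq] using hdist k

end

theorem stmt16_general (N : ℕ) (h : Fin N → Fin N → ℝ) (h0 n g Pmax pstar : Fin N → ℝ)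
    (hh : ∀ i j, 0 < h i j) (hh0 : ∀ i, 0 < h0 i) (hg : ∀ i, 0 < g i)
    (hn : ∀ i, 0 < n i)
    (hp1 : ∀ i, 0 < pstar i) (hp2 : ∀ i, pstar i ≤ Pmax i)
    (a b : Fin N → ℝ)
    (ha : ∀ k, a k = (∑ l ∈ univ.erase k, h k l * pstar l + n k) /
      (g k * pstar k * h0 k))
    (hb : ∀ k, b k = (Pmax k - pstar k) *
      (∑ l ∈ univ.erase k, h k l * pstar l + n k) / (pstar k * h0 k))
    (hij : ∃ i j : Fin N, i ≠ j ∧ pstar i < Pmax i ∧ pstar j < Pmax j ∧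
      (((∀ k, pstar k < Pmax k → a k ≤ a i) ∧ a j < a i) ∨
        ((∃ k, pstar k < Pmax k ∧ a i < a k) ∧ (∃ k, pstar k < Pmax k ∧ a j < a k))) ∧
      (((∀ k, pstar k < Pmax k → b k ≤ b i) ∧ b j < b i) ∨
        ((∃ k, pstar k < Pmax k ∧ b i < b k) ∧ (∃ k, pstar k < Pmax k ∧ b j < b k)))) :
    ∀ α0 P0 : ℝ, 0 ≤ α0 → 0 < P0 →
      isNE Pmax (sinrA h h0 n g α0 pstar P0) pstar →
      ∀ ε : ℝ, 0 < ε →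
        ∃ pt : Fin N → ℝ, pt ≠ pstar ∧
          (∀ k, 0 ≤ pt k ∧ pt k ≤ Pmax k) ∧
          isNE Pmax (sinrA h h0 n g α0 pstar P0) pt ∧
          (∑ k, g k * pt k) = (∑ k, g k * pstar k) ∧
          (∀ k, |pt k - pstar k| < ε) := by
  intro α0 P0 hα0 hP0 hNE ε hε
  obtain ⟨i, j, hij, hi, hj, hacase, hbcase⟩ := hij
  have hNE_iff {p : Fin N → ℝ} (hp : ∀ k, 0 ≤ p k)
      (hagg : ∑ l, g l * p l = ∑ l, g l * pstar l) :=
    isNE_sinrA_iff (Pmax := Pmax) (fun k l => (hh k l).le) (fun k => hh k k)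
      (fun k => (hh0 k).le) (fun k => (hg k).le) hn hα0 hP0 hp hagg
  have hcond := (hNE_iff (fun k => (hp1 k).le) rfl).1 hNE
  obtain ⟨w, hw, haw⟩ := exists_lt_of_max_or_lt hacase hi
  obtain ⟨w', hw', hbw⟩ := exists_lt_of_max_or_lt hbcase hi
  have hαj : interference h n j pstar < α0 * (g j * pstar j * h0 j) := by
    have haw_le : a w ≤ α0 := by
      rw [ha w, div_le_iff₀ (mul_pos (mul_pos (hg w) (hp1 w)) (hh0 w))]
      exact (hcond w hw).1
    have := haw.trans_le haw_le
    rwa [ha j, div_lt_iff₀ (mul_pos (mul_pos (hg j) (hp1 j)) (hh0 j))] at this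
  have hPj : (Pmax j - pstar j) * interference h n j pstar < P0 * (pstar j * h0 j) := by
    have hbw_le : b w' ≤ P0 := by
      rw [hb w', div_le_iff₀ (mul_pos (hp1 w') (hh0 w'))]
      exact (hcond w' hw').2
    have := hbw.trans_le hbw_le
    rwa [hb j, div_lt_iff₀ (mul_pos (hp1 j) (hh0 j))] at this
  obtain ⟨pt, hne, hbd, hth, hagg, hclose⟩ := exists_ne_meetsThresholds_of_strict
    (fun k l => (hh k l).le) (fun k => (hh0 k).le) hg (fun k => (hn k).le) hP0.le hp1 hp2 hij hi
    hj hcond hαj hPj hε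
  exact ⟨pt, hne, hbd, (hNE_iff (fun k => (hbd k).1) hagg).2 hth, hagg, hclose⟩

/-- Theorem 7: under the stated condition on two users `i, j` (each of the pairs
`(α₀ⁱ, α₀ʲ)` and `(P₀ⁱ, P₀ʲ)` either has its first entry equal to the maximum over
users in `Ñ(p*)` and strictly above the second, or both entries strictly below the
maximum), any aggregate-power intervention rule sustaining `p*` also sustains, for
every `ε > 0`, some other profile `p̃ ≠ p*` with the same aggregate receive power
and `|p̃ − p*| < ε`. In particular `p*` cannot be strongly sustained. -/
theorem stmt16 (N : ℕ) (h : Fin N → Fin N → ℝ) (h0 n g Pmax pstar : Fin N → ℝ)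
    (hh : ∀ i j, 0 < h i j) (hh0 : ∀ i, 0 < h0 i) (hg : ∀ i, 0 < g i)
    (hn : ∀ i, 0 < n i)
    (hP : ∀ i, 0 < Pmax i) (hp1 : ∀ i, 0 < pstar i) (hp2 : ∀ i, pstar i ≤ Pmax i)
    (a b : Fin N → ℝ)
    (ha : ∀ k, a k = (∑ l ∈ univ.erase k, h k l * pstar l + n k) /
      (g k * pstar k * h0 k))
    (hb : ∀ k, b k = (Pmax k - pstar k) *
      (∑ l ∈ univ.erase k, h k l * pstar l + n k) / (pstar k * h0 k))
    (hij : ∃ i j : Fin N, i ≠ j ∧ pstar i < Pmax i ∧ pstar j < Pmax j ∧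
      (((∀ k, pstar k < Pmax k → a k ≤ a i) ∧ a j < a i) ∨
        ((∃ k, pstar k < Pmax k ∧ a i < a k) ∧ (∃ k, pstar k < Pmax k ∧ a j < a k))) ∧
      (((∀ k, pstar k < Pmax k → b k ≤ b i) ∧ b j < b i) ∨
        ((∃ k, pstar k < Pmax k ∧ b i < b k) ∧ (∃ k, pstar k < Pmax k ∧ b j < b k)))) :
    ∀ α0 P0 : ℝ, 0 ≤ α0 → 0 < P0 →
      isNE Pmax (sinrA h h0 n g α0 pstar P0) pstar →
      ∀ ε : ℝ, 0 < ε →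
        ∃ pt : Fin N → ℝ, pt ≠ pstar ∧
          (∀ k, 0 ≤ pt k ∧ pt k ≤ Pmax k) ∧
          isNE Pmax (sinrA h h0 n g α0 pstar P0) pt ∧
          (∑ k, g k * pt k) = (∑ k, g k * pstar k) ∧
          (∀ k, |pt k - pstar k| < ε) :=
  stmt16_general N h h0 n g Pmax pstar hh hh0 hg hn hp1 hp2 a b ha hb hij
end
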